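/- arXiv:0910.1655 — 2 statements merged into one kernel-verified Lean document; each statement's English description precedes it below -/
import Mathlib

section
/- Let $G$ act doubly transitively on $X=\{1,\dots,n\}$ ($n\geq2$) and let $(\nu^\sigma)_{\sigma\in G}$ be sign vectors satisfying the cocycle relation $\nu^{\sigma\delta}_j=\nu^\sigma_{\delta(j)}\nu^\delta_j$. Then the number of symmetric $n\times n$ matrices $\mathcal{E}=(\varepsilon_{i,j})$ with zero diagonal, off-diagonal entries in $\{\pm1\}$, satisfying $\varepsilon_{\sigma(i),\sigma(j)}=\nu^\sigma_i\nu^\sigma_j\varepsilon_{i,j}$ for all $\sigma\in G$ and all $i\neq j$, is either $0$ or $2$; moreover if $\mathcal{E}$ is such a matrix then so is $-\mathcal{E}$. -/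
/-- For a doubly transitive action with a cocycle of sign vectors, the number
of compatible symmetric sign matrices is `0` or `2`, and the set of such
matrices is stable under negation. -/
theorem stmt3 {n : ℕ} (hn : 2 ≤ n) {G : Type*} [Group G] [MulAction G (Fin n)]
    (h2trans : ∀ i j k l : Fin n, i ≠ j → k ≠ l →
      ∃ σ : G, σ • i = k ∧ σ • j = l)
    (ν : G → Fin n → ℝ)
    (hν : ∀ σ j, ν σ j = 1 ∨ ν σ j = -1)
    (hcocycle : ∀ (σ δ : G) (j : Fin n), ν (σ * δ) j = ν σ (δ • j) * ν δ j) :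
    let M : Set (Matrix (Fin n) (Fin n) ℝ) :=
      {E | E.IsSymm ∧ (∀ i, E i i = 0) ∧
        (∀ i j, i ≠ j → E i j = 1 ∨ E i j = -1) ∧
        (∀ (σ : G) (i j : Fin n), i ≠ j →
          E (σ • i) (σ • j) = ν σ i * ν σ j * E i j)}
    (M.ncard = 0 ∨ M.ncard = 2) ∧ ∀ E ∈ M, -E ∈ M := by
  intro M
  have hneg : ∀ E ∈ M, -E ∈ M := by
    rintro E ⟨hsym, hdiag, hoff, hequiv⟩
    refine ⟨?_, ?_, ?_, ?_⟩
    · unfold Matrix.IsSymm at hsym ⊢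
      rw [Matrix.transpose_neg, hsym]
    · intro i; simp [hdiag i]
    · intro i j hij
      rcases hoff i j hij with h | h <;> simp [h]
    · intro σ i j hij
      simp only [Matrix.neg_apply, hequiv σ i j hij]
      ring
  refine ⟨?_, hneg⟩
  rcases Set.eq_empty_or_nonempty M with hM | ⟨E0, hE0⟩
  · left; simp [hM]
  · right
    set i0 : Fin n := ⟨0, by omega⟩ with hi0
    set j0 : Fin n := ⟨1, by omega⟩ with hj0
    have hij0 : i0 ≠ j0 := by simp [hi0, hj0, Fin.ext_iff]
    -- two members agreeing at (i0, j0) are equal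
    have hdet : ∀ E ∈ M, ∀ E' ∈ M, E i0 j0 = E' i0 j0 → E = E' := by
      rintro E ⟨_, hdiag, _, hequiv⟩ E' ⟨_, hdiag', _, hequiv'⟩ h
      ext k l
      by_cases hkl : k = l
      · subst hkl; rw [hdiag k, hdiag' k]
      · obtain ⟨σ, hk, hl⟩ := h2trans i0 j0 k l hij0 hkl
        rw [← hk, ← hl, hequiv σ i0 j0 hij0, hequiv' σ i0 j0 hij0, h]
    have key : M = {E0, -E0} := by
      ext E
      constructor
      · intro hE
        have hoff := hE.2.2.1
        have hoff0 := hE0.2.2.1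
        rcases hoff i0 j0 hij0 with h | h <;> rcases hoff0 i0 j0 hij0 with h0 | h0
        · exact Or.inl (hdet E hE E0 hE0 (by rw [h, h0]))
        · refine Or.inr (hdet E hE (-E0) (hneg E0 hE0) ?_)
          simp [h, h0]
        · refine Or.inr (hdet E hE (-E0) (hneg E0 hE0) ?_)
          simp [h, h0]
        · exact Or.inl (hdet E hE E0 hE0 (by rw [h, h0]))
      · rintro (rfl | rfl)
        · exact hE0
        · exact hneg E0 hE0
    rw [key]
    rw [Set.ncard_pair]
    intro h
    have hoff0 := hE0.2.2.1
    rcases hoff0 i0 j0 hij0 with h0 | h0 <;>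
    · have := congrFun (congrFun h i0) j0
      rw [h0] at this
      simp [h0] at this
      norm_num at this
end

section
/- Let $q$ be an odd prime power and let $GL_2^+(q)\subseteq GL_2(\mathbb{F}_q)$ be the subgroup of matrices whose determinant is a nonzero square. Let $G$ with $SL_2(\mathbb{F}_q)\subseteq G\subseteq GL_2(\mathbb{F}_q)$. Then $G$ acts transitively on the set of pairs $(v,w)$ of linearly independent vectors of $\mathbb{F}_q^2$ up to squares of scalars (precisely: for any two pairs of independent vectors $(v,w),(v',w')$ there is $\sigma\in G$ and squares $\lambda,\mu\in(\mathbb{F}_q^\times)^2$ with $\sigma v=\lambda v'$, $\sigma w=\mu w'$) if and only if $G\not\subseteq GL_2^+(q)$. -/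
/-!
A matrix sending a basis `(v, w)` to `(λ v', μ w')` has determinant `λ μ · det(v', w') / det(v, w)`,
and since `G ⊇ SL₂`, membership in `G` depends only on the determinant. If every determinant in
`G` is a square, then `(e₁, e₂) ↦ (a² e₁, b² c e₂)` with `c` a nonsquare is impossible in `G`.
Otherwise `det G` contains a nonsquare `u`, and since `Fˣ / (Fˣ)²` has order two, some `r ≠ 0`
makes `r² · det(v', w') / det(v, w)` equal to `1` or `u`.
-/

open Matrix

section
variable {n : Type*} [Fintype n] [DecidableEq n]

theorem Matrix.GeneralLinearGroup.mem_of_det_eq {R : Type*} [CommRing R]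
    {G : Subgroup (GL n R)} (hSL : ∀ A : SpecialLinearGroup n R, A.toGL ∈ G)
    {σ A : GL n R} (hA : A ∈ G) (h : (σ : Matrix n n R).det = (A : Matrix n n R).det) :
    σ ∈ G := by
  have hdet : ((A⁻¹ * σ : GL n R) : Matrix n n R).det = 1 := by
    rw [Units.val_mul, det_mul, coe_units_inv, det_nonsing_inv, h,
      Ring.inverse_mul_cancel _ ((isUnit_iff_isUnit_det _).mp A.isUnit)]
  have hSLelt : SpecialLinearGroup.toGL ⟨_, hdet⟩ = A⁻¹ * σ := Units.ext rfl
  have hmem := mul_mem hA (hSL ⟨_, hdet⟩)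
  rwa [hSLelt, mul_inv_cancel_left] at hmem

theorem Matrix.det_mul_det_of_mulVec_eq_smul {R : Type*} [CommRing R] {M : Matrix n n R}
    {v v' : n → n → R} {s : n → R} (h : ∀ i, M *ᵥ v i = s i • v' i) :
    M.det * (of v).det = (∏ i, s i) * (of v').det := by
  have hrows : of v * Mᵀ = of fun i j => s i * v' i j := by
    ext i j
    simpa [mul_apply, mulVec, dotProduct, mul_comm] using congrFun (h i) j
  rw [← det_transpose M, mul_comm, ← det_mul, hrows]
  exact det_mul_column s (of v')

theorem Matrix.linearIndependent_rows_iff_det_ne_zero {K : Type*} [Field K] {v : n → n → K} :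
    LinearIndependent K v ↔ (of v).det ≠ 0 := by
  rw [← isUnit_iff_ne_zero, ← isUnit_iff_isUnit_det]
  exact linearIndependent_rows_iff_isUnit

theorem Matrix.exists_mulVec_eq {K : Type*} [Field K] {v : n → n → K}
    (hv : LinearIndependent K v) (v' : n → n → K) :
    ∃ M : Matrix n n K, ∀ i, M *ᵥ v i = v' i := by
  have hP : IsUnit (of v)ᵀ := (isUnit_transpose _).mpr (linearIndependent_rows_iff_isUnit.mp hv)
  refine ⟨(of v')ᵀ * (of v)ᵀ⁻¹, fun i => ?_⟩
  have hcol : (of v)ᵀ *ᵥ Pi.single i 1 = v i := by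
    ext j; simp [mulVec_single]
  rw [← hcol, mulVec_mulVec, Matrix.mul_assoc,
    nonsing_inv_mul _ ((isUnit_iff_isUnit_det _).mp hP), Matrix.mul_one]
  ext j; simp [mulVec_single]

theorem Matrix.exists_mem_mulVec_eq_smul {K : Type*} [Field K] {G : Subgroup (GL n K)}
    (hSL : ∀ A : SpecialLinearGroup n K, A.toGL ∈ G) {A : GL n K} (hA : A ∈ G)
    {v v' : n → n → K} (hv : LinearIndependent K v) {s : n → K}
    (hdet : (∏ i, s i) * (of v').det = (A : Matrix n n K).det * (of v).det) :
    ∃ σ ∈ G, ∀ i, (σ : Matrix n n K) *ᵥ v i = s i • v' i := by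
  obtain ⟨M, hM⟩ := exists_mulVec_eq hv fun i => s i • v' i
  have hMdet : M.det = (A : Matrix n n K).det :=
    mul_right_cancel₀ (linearIndependent_rows_iff_det_ne_zero.mp hv)
      ((det_mul_det_of_mulVec_eq_smul hM).trans hdet)
  have hM0 : M.det ≠ 0 := hMdet ▸ ((isUnit_iff_isUnit_det _).mp A.isUnit).ne_zero
  exact ⟨GeneralLinearGroup.mkOfDetNeZero M hM0, GeneralLinearGroup.mem_of_det_eq hSL hA hMdet, hM⟩

end

theorem ne_zero_of_not_isSquare {M₀ : Type*} [MulZeroClass M₀] {a : M₀} (h : ¬IsSquare a) :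
    a ≠ 0 :=
  fun h0 => h (h0 ▸ .zero)

theorem FiniteField.isSquare_mul_of_not_isSquare {F : Type*} [Field F] [Fintype F] {x y : F}
    (hx : ¬IsSquare x) (hy : ¬IsSquare y) : IsSquare (x * y) := by
  classical
  have hxy : x * y ≠ 0 := mul_ne_zero (ne_zero_of_not_isSquare hx) (ne_zero_of_not_isSquare hy)
  rw [← quadraticChar_neg_one_iff_not_isSquare] at hx hy
  rw [← quadraticChar_one_iff_isSquare hxy, map_mul, hx, hy, neg_one_mul, neg_neg]

theorem FiniteField.exists_sq_mul_eq_or_eq_mul {F : Type*} [Field F] [Fintype F] {u x y : F}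
    (hu : ¬IsSquare u) (hx : x ≠ 0) (hy : y ≠ 0) :
    ∃ r ≠ 0, r ^ 2 * x = y ∨ r ^ 2 * x = u * y := by
  have hyx : y / x ≠ 0 := div_ne_zero hy hx
  by_cases hsq : IsSquare (y / x)
  · obtain ⟨r, hr⟩ := hsq
    refine ⟨r, fun h => hyx (by simp [hr, h]), Or.inl ?_⟩
    rw [sq, ← hr, div_mul_cancel₀ _ hx]
  · obtain ⟨r, hr⟩ := isSquare_mul_of_not_isSquare hu hsq
    have hr0 : r ≠ 0 := fun h => mul_ne_zero (ne_zero_of_not_isSquare hu) hyx (by simp [hr, h])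
    refine ⟨r, hr0, Or.inr ?_⟩
    rw [sq, ← hr, mul_assoc, div_mul_cancel₀ _ hx]

/-- For `SL₂(F) ⊆ G ⊆ GL₂(F)`, the group `G` is transitive on pairs of
independent vectors up to squares of scalars iff `G` is not contained in the
subgroup `GL₂⁺` of matrices with square determinant. -/
theorem stmt14 {F : Type*} [Field F] [Fintype F] (hq : Odd (Fintype.card F))
    (G : Subgroup (GL (Fin 2) F))
    (hSL : ∀ A : Matrix.SpecialLinearGroup (Fin 2) F,
      Matrix.SpecialLinearGroup.toGL A ∈ G) :
    (∀ v w v' w' : Fin 2 → F,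
        LinearIndependent F ![v, w] → LinearIndependent F ![v', w'] →
        ∃ σ ∈ G, ∃ a b : F, a ≠ 0 ∧ b ≠ 0 ∧
          ((σ : GL (Fin 2) F) : Matrix (Fin 2) (Fin 2) F).mulVec v = a ^ 2 • v' ∧
          ((σ : GL (Fin 2) F) : Matrix (Fin 2) (Fin 2) F).mulVec w = b ^ 2 • w') ↔
      ¬ (∀ A ∈ G, IsSquare (((A : GL (Fin 2) F) : Matrix (Fin 2) (Fin 2) F).det)) := by
  constructor
  · intro htrans hsq
    have hchar : ringChar F ≠ 2 := by
      rwa [Ne, FiniteField.even_card_iff_char_two, ← Nat.even_iff, Nat.not_even_iff_odd]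
    obtain ⟨c, hc⟩ := FiniteField.exists_nonsquare hchar
    obtain ⟨σ, hσ, a, b, ha, hb, hσv, hσw⟩ := htrans ![1, 0] ![0, 1] ![1, 0] ![0, c]
      (by simp [linearIndependent_rows_iff_det_ne_zero, det_fin_two_of])
      (by simp [linearIndependent_rows_iff_det_ne_zero, det_fin_two_of,
        ne_zero_of_not_isSquare hc])
    have hdet : (σ : Matrix (Fin 2) (Fin 2) F).det = a ^ 2 * b ^ 2 * c := by
      simpa [det_fin_two_of, Fin.prod_univ_two] using det_mul_det_of_mulVec_eq_smul
        (v := ![![1, 0], ![0, 1]]) (v' := ![![1, 0], ![0, c]]) (s := ![a ^ 2, b ^ 2])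
        (Fin.forall_fin_two.mpr ⟨hσv, hσw⟩)
    obtain ⟨d, hd⟩ := hsq σ hσ
    refine hc ⟨d / (a * b), ?_⟩
    field_simp
    linear_combination hd - hdet
  · intro hnot v w v' w' hvw hvw'
    obtain ⟨A₀, hA₀, hA₀sq⟩ := not_forall₂.mp hnot
    obtain ⟨r, hr, hdet⟩ := FiniteField.exists_sq_mul_eq_or_eq_mul hA₀sq
      (linearIndependent_rows_iff_det_ne_zero.mp hvw')
      (linearIndependent_rows_iff_det_ne_zero.mp hvw)
    obtain ⟨A, hA, hAdet⟩ : ∃ A ∈ G, r ^ 2 * (of ![v', w']).det =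
        (A : Matrix (Fin 2) (Fin 2) F).det * (of ![v, w]).det :=
      hdet.elim (fun h => ⟨1, one_mem G, by simpa using h⟩) fun h => ⟨A₀, hA₀, h⟩
    obtain ⟨σ, hσ, hσv⟩ := exists_mem_mulVec_eq_smul hSL hA hvw (s := ![r ^ 2, 1])
      (by simpa [Fin.prod_univ_two] using hAdet)
    exact ⟨σ, hσ, r, 1, hr, one_ne_zero, by simpa using hσv 0, by simpa using hσv 1⟩
end
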